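/- Let B be a strict supertropically symmetric bilinear form on a supertropical vector space V over a supertropical semifield F, and let S = {s₁,…,s_n} ⊆ V be a set any two of whose elements form a Cauchy-Schwartz pair. Then any two vectors in the span of S are weakly Cauchy-Schwartz: for v = Σᵢ αᵢsᵢ and w = Σⱼ βⱼsⱼ with αᵢ, βⱼ ∈ F, one has ⟨v,v⟩⟨w,w⟩ ≥_ν ⟨v,w⟩² + ⟨w,v⟩². -/

import Mathlib

/-- A supertropical semifield (with an adjoined zero element), following
Izhakian–Knebusch–Rowen: a commutative semiring `F` together with an idempotent
additive and multiplicative ghost map `ν : F → F` whose fixed points are the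
ghost elements (together with `0`), such that `a + b = ν a` when `ν a = ν b`
and `a + b ∈ {a, b}` otherwise, the tangible elements `T = F ∖ (G ∪ {0})`
form a multiplicative group, and `ν` maps `T` onto the nonzero ghosts. -/
class SupertropicalSemifield (F : Type*) extends CommSemiring F where
  nu : F → F
  nu_zero : nu 0 = 0
  nu_idem : ∀ a, nu (nu a) = nu a
  nu_add : ∀ a b, nu (a + b) = nu a + nu b
  nu_mul : ∀ a b, nu (a * b) = nu a * nu b
  add_eq_nu : ∀ a b, nu a = nu b → a + b = nu a
  add_cases : ∀ a b, nu a ≠ nu b → a + b = a ∨ a + b = b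
  tangible_inv : ∀ a, nu a ≠ a → ∃ b, nu b ≠ b ∧ a * b = 1
  nu_onto : ∀ g, nu g = g → g ≠ 0 → ∃ t, nu t ≠ t ∧ nu t = g

namespace Supertropical

open SupertropicalSemifield

variable (F : Type*) [SupertropicalSemifield F]

/-- `a` is ghost or zero (i.e. `a ∈ G ∪ {0}`, the fixed points of `ν`). -/
def Ghost0 (a : F) : Prop := nu a = a

/-- `a` is tangible: `a ∈ T = F ∖ (G ∪ {0})`. -/
def Tangible (a : F) : Prop := nu a ≠ a

/-- The ghost-surpassing relation on `F`:  `b ⊨_gs a` iff `b = a + c` with `c` ghost or zero. -/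
def GS (b a : F) : Prop := ∃ c, Ghost0 F c ∧ b = a + c

/-- `a ≥_ν b`. -/
def nuGE (a b : F) : Prop := nu a + nu b = nu a

/-- `a >_ν b`. -/
def nuGT (a b : F) : Prop := nuGE F a b ∧ nu a ≠ nu b

/-- `a ≅_ν b` (`ν`-matched). -/
def nuEq (a b : F) : Prop := nu a = nu b

section VS

variable {V : Type*} [AddCommMonoid V] [Module F V]

/-- `v` lies in the ghost submodule `H₀ = eV`, `e = 1 + 1`. -/
def GhostV (v : V) : Prop := ∃ u : V, v = ((1 : F) + 1) • u

/-- The ghost-surpassing relation on a supertropical vector space: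
`v ⊨_gs w` iff `v = w + h` with `h ∈ H₀`. -/
def GSV (v w : V) : Prop := ∃ h : V, GhostV F h ∧ v = w + h

variable {W : Type*} [AddCommMonoid W] [Module F W]

/-- A supertropical map `φ : V → W`: `φ(v + w) ⊨_gs φ(v) + φ(w)` and
`φ(a • v) = a • φ(v)` for tangible `a`. -/
def STMap (φ : V → W) : Prop :=
  (∀ v w : V, GSV F (φ (v + w)) (φ v + φ w)) ∧
    ∀ a : F, Tangible F a → ∀ v : V, φ (a • v) = a • φ v

/-- A family of vectors is tropically independent if no linear combination with
tangible coefficients, not all zero, lies in the ghost submodule. -/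
def TropIndep {m : ℕ} (v : Fin m → V) : Prop :=
  ∀ β : Fin m → F, (∀ i, Tangible F (β i) ∨ β i = 0) → (∃ i, β i ≠ 0) →
    ¬ GhostV F (∑ i, β i • v i)

/-- `S ⊆ V` has rank `r`: it contains `r` tropically independent vectors, and no
tropically independent family in `S` has more than `r` members. -/
def HasRank (S : Set V) (r : ℕ) : Prop :=
  (∃ v : Fin r → V, (∀ i, v i ∈ S) ∧ TropIndep F v) ∧
    ∀ (m : ℕ) (v : Fin m → V), (∀ i, v i ∈ S) → TropIndep F v → m ≤ r

/-- A supertropical bilinear form: a supertropical map in each variable. -/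
def IsBilinear (B : V → V → F) : Prop :=
  (∀ w : V, STMap F (fun v => B v w)) ∧ ∀ v : V, STMap F (fun w => B v w)

/-- `B` is supertropically symmetric: `⟨v,w⟩ + ⟨w,v⟩` is ghost (or zero) for all `v, w`. -/
def SupSymmetric (B : V → V → F) : Prop := ∀ v w : V, Ghost0 F (B v w + B w v)

/-- A strict bilinear form. -/
def IsStrict (B : V → V → F) : Prop :=
  ∀ (a₁ a₂ b₁ b₂ : F) (v₁ v₂ w₁ w₂ : V),
    B (a₁ • v₁ + a₂ • v₂) (b₁ • w₁ + b₂ • w₂) =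
      a₁ * b₁ * B v₁ w₁ + a₁ * b₂ * B v₁ w₂ + a₂ * b₁ * B v₂ w₁ + a₂ * b₂ * B v₂ w₂

/-- `v` and `w` are compatible: `⟨v,v⟩ + ⟨w,w⟩ ≥_ν ⟨v,w⟩ + ⟨w,v⟩`. -/
def Compatible (B : V → V → F) (v w : V) : Prop :=
  nuGE F (B v v + B w w) (B v w + B w v)

/-- `v` and `w` are strictly compatible. -/
def StrictlyCompatible (B : V → V → F) (v w : V) : Prop :=
  Compatible F B v w ∧
    (nuEq F (B v v) (B w w) ∨ nuGT F (B v v + B w w) (B v w + B w v))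

/-- The pair `{v, w}` is weakly Cauchy-Schwartz: `⟨v,v⟩⟨w,w⟩ ≥_ν ⟨v,w⟩² + ⟨w,v⟩²`. -/
def WeakCS (B : V → V → F) (v w : V) : Prop :=
  nuGE F (B v v * B w w) (B v w ^ 2 + B w v ^ 2)

/-- The pair `{v, w}` is Cauchy-Schwartz: `⟨v,v⟩⟨w,w⟩ >_ν ⟨v,w⟩² + ⟨w,v⟩²`. -/
def CS (B : V → V → F) (v w : V) : Prop :=
  nuGT F (B v v * B w w) (B v w ^ 2 + B w v ^ 2)

end VS

/-- The permanent (supertropical determinant) of a square matrix. -/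
def perm {n : ℕ} (A : Matrix (Fin n) (Fin n) F) : F :=
  ∑ σ : Equiv.Perm (Fin n), ∏ i, A i (σ i)

/-- The supertropical adjoint matrix: the transpose of the matrix of cofactors. -/
def adjSup {n : ℕ} (A : Matrix (Fin (n + 1)) (Fin (n + 1)) F) :
    Matrix (Fin (n + 1)) (Fin (n + 1)) F :=
  Matrix.of fun i j => perm F (A.submatrix (Fin.succAbove j) (Fin.succAbove i))

end Supertropical

/-!
Over a supertropical semifield `ν(a + b) = max (ν a) (ν b)`, so `x ≥_ν Σₖ tₖ` as soon as
`x ≥_ν tₖ` for every `k`; moreover `a² ≥_ν b²` implies `a ≥_ν b`. Hence `x ≥_ν (Σₖ tₖ)²` once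
`x ≥_ν tₖ²` for all `k`, because `(tₖ tₗ)² = tₖ² tₗ² ≤_ν x²`. Expanding
`⟨v,w⟩ = Σᵢⱼ αᵢβⱼ⟨sᵢ,sⱼ⟩` by strictness, the Cauchy-Schwartz property of `{sᵢ, sⱼ}` gives
`(αᵢβⱼ⟨sᵢ,sⱼ⟩)² ≤_ν (αᵢ²⟨sᵢ,sᵢ⟩)(βⱼ²⟨sⱼ,sⱼ⟩) ≤_ν ⟨v,v⟩⟨w,w⟩`, the diagonal terms being summands
of the expansions of `⟨v,v⟩` and `⟨w,w⟩`. The same bound for `⟨w,v⟩²` comes from swapping `v, w`.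
-/

namespace Supertropical

open SupertropicalSemifield

variable {F : Type*} [SupertropicalSemifield F]

theorem nuGE_refl (a : F) : nuGE F a a := by
  rw [nuGE, add_eq_nu _ _ rfl, nu_idem]

theorem nuGE.trans {a b c : F} (hab : nuGE F a b) (hbc : nuGE F b c) : nuGE F a c := by
  rw [nuGE, ← hab, add_assoc, hbc]

theorem nu_eq_of_nuGE_of_nuGE {a b : F} (hab : nuGE F a b) (hba : nuGE F b a) : nu a = nu b := by
  rw [← hab, add_comm, hba]

theorem nuGE_total (a b : F) : nuGE F a b ∨ nuGE F b a := by
  by_cases h : nu a = nu b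
  · exact Or.inl (by rw [nuGE, h]; exact nuGE_refl b)
  · rcases add_cases (nu a) (nu b) (by rwa [nu_idem, nu_idem]) with h' | h'
    · exact Or.inl h'
    · exact Or.inr (by rw [nuGE, add_comm, h'])

theorem add_nuGE_left (a b : F) : nuGE F (a + b) a := by
  rw [nuGE, nu_add, add_right_comm, nuGE_refl a]

theorem nuGE_add {x a b : F} (ha : nuGE F x a) (hb : nuGE F x b) : nuGE F x (a + b) := by
  rw [nuGE, nu_add, ← add_assoc, ha, hb]

theorem nuGE_sum {ι : Type*} {s : Finset ι} {x : F} {f : ι → F}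
    (h : ∀ i ∈ s, nuGE F x (f i)) : nuGE F x (∑ i ∈ s, f i) := by
  classical
  induction s using Finset.induction_on with
  | empty => rw [Finset.sum_empty, nuGE, nu_zero, add_zero]
  | insert i s hi ih =>
    rw [Finset.sum_insert hi]
    exact nuGE_add (h i (s.mem_insert_self i))
      (ih fun j hj => h j (Finset.mem_insert_of_mem hj))

theorem sum_nuGE_of_mem {ι : Type*} {s : Finset ι} {f : ι → F} {i : ι} (hi : i ∈ s) :
    nuGE F (∑ j ∈ s, f j) (f i) := by
  classical
  rw [← Finset.add_sum_erase s f hi]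
  exact add_nuGE_left _ _

theorem nuGE_mul_left {a b : F} (c : F) (h : nuGE F a b) : nuGE F (c * a) (c * b) := by
  rw [nuGE, nu_mul, nu_mul, ← mul_add, h]

theorem nuGE_mul_right {a b : F} (c : F) (h : nuGE F a b) : nuGE F (a * c) (b * c) := by
  simpa only [mul_comm _ c] using nuGE_mul_left c h

theorem nuGE_mul {a b c d : F} (hab : nuGE F a b) (hcd : nuGE F c d) : nuGE F (a * c) (b * d) :=
  (nuGE_mul_left a hcd).trans (nuGE_mul_right d hab)

/-- Nonzero `ν`-values are invertible: a tangible preimage of `ν c` has a tangible inverse. -/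
theorem nu_mul_right_cancel {a b c : F} (hc : c ≠ 0) (h : nu a * nu c = nu b * nu c) :
    nu a = nu b := by
  obtain ⟨d, hd⟩ : ∃ d : F, nu c * nu d = nu 1 := by
    by_cases hct : nu c = c
    · obtain ⟨t, ht, htc⟩ := nu_onto c hct hc
      obtain ⟨u, -, htu⟩ := tangible_inv t ht
      exact ⟨u, by rw [← htc, nu_idem, ← nu_mul, htu]⟩
    · obtain ⟨d, -, hcd⟩ := tangible_inv c hct
      exact ⟨d, by rw [← nu_mul, hcd]⟩
  calc nu a = nu a * (nu c * nu d) := by rw [hd, ← nu_mul, mul_one]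
    _ = nu b * (nu c * nu d) := by rw [← mul_assoc, h, mul_assoc]
    _ = nu b := by rw [hd, ← nu_mul, mul_one]

theorem nuGE_of_mul_self_nuGE_mul_self {a b : F} (h : nuGE F (a * a) (b * b)) : nuGE F a b := by
  rcases nuGE_total a b with hab | hba
  · exact hab
  suffices hν : nu a = nu b by rw [nuGE, hν]; exact nuGE_refl b
  by_cases hb : b = 0
  · subst hb
    rw [nuGE, nu_zero, zero_add] at hba
    rw [hba, nu_zero]
  · refine nu_mul_right_cancel hb ?_
    rw [← nu_mul, ← nu_mul]
    -- `b² ≥_ν ab ≥_ν a² ≥_ν b²`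
    exact nu_eq_of_nuGE_of_nuGE ((nuGE_mul_left a hba).trans h)
      (nuGE_mul_right b hba)

theorem nuGE_sq_sum {ι : Type*} {s : Finset ι} {x : F} {f : ι → F}
    (h : ∀ i ∈ s, nuGE F x (f i ^ 2)) : nuGE F x ((∑ i ∈ s, f i) ^ 2) := by
  rw [sq, Finset.sum_mul_sum]
  refine nuGE_sum fun i hi => nuGE_sum fun j hj => nuGE_of_mul_self_nuGE_mul_self ?_
  convert nuGE_mul (h i hi) (h j hj) using 1; ring

theorem CS.nuGE_sq {V : Type*} [AddCommMonoid V] [Module F V] {B : V → V → F} {v w : V}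
    (h : CS F B v w) : nuGE F (B v v * B w w) (B v w ^ 2) :=
  h.1.trans (add_nuGE_left _ _)

namespace IsStrict

variable {V : Type*} [AddCommMonoid V] [Module F V] {B : V → V → F}

theorem smul_left (hB : IsStrict F B) (a : F) (v w : V) : B (a • v) w = a * B v w := by
  simpa using hB a 0 1 0 v 0 w 0

theorem smul_right (hB : IsStrict F B) (a : F) (v w : V) : B v (a • w) = a * B v w := by
  simpa [mul_comm] using hB 1 0 a 0 v 0 w 0

theorem sum_left (hB : IsStrict F B) {ι : Type*} (s : Finset ι) (v : ι → V) (w : V) :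
    B (∑ i ∈ s, v i) w = ∑ i ∈ s, B (v i) w :=
  map_sum ({ toFun := (B · w)
             map_zero' := by simpa using hB 0 0 1 0 0 0 w 0
             map_add' := fun v₁ v₂ => by simpa using hB 1 1 1 0 v₁ v₂ w 0 } : V →+ F) v s

theorem sum_right (hB : IsStrict F B) {ι : Type*} (s : Finset ι) (v : V) (w : ι → V) :
    B v (∑ j ∈ s, w j) = ∑ j ∈ s, B v (w j) :=
  map_sum ({ toFun := B v
             map_zero' := by simpa using hB 1 0 0 0 v 0 0 0
             map_add' := fun w₁ w₂ => by simpa using hB 1 0 1 1 v 0 w₁ w₂ } : V →+ F) w s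

theorem sum_smul_sum (hB : IsStrict F B) {ι : Type*} (s : Finset ι) (v : ι → V) (α β : ι → F) :
    B (∑ i ∈ s, α i • v i) (∑ j ∈ s, β j • v j) =
      ∑ i ∈ s, ∑ j ∈ s, α i * β j * B (v i) (v j) := by
  rw [hB.sum_left]
  refine Finset.sum_congr rfl fun i _ => ?_
  rw [hB.smul_left, hB.sum_right, Finset.mul_sum]
  refine Finset.sum_congr rfl fun j _ => ?_
  rw [hB.smul_right]
  ring

theorem nuGE_sq_sum_smul (hB : IsStrict F B) {ι : Type*} {s : Finset ι} {v : ι → V}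
    (hv : ∀ i ∈ s, ∀ j ∈ s, nuGE F (B (v i) (v i) * B (v j) (v j)) (B (v i) (v j) ^ 2))
    (α β : ι → F) :
    nuGE F (B (∑ i ∈ s, α i • v i) (∑ i ∈ s, α i • v i) *
        B (∑ j ∈ s, β j • v j) (∑ j ∈ s, β j • v j))
      (B (∑ i ∈ s, α i • v i) (∑ j ∈ s, β j • v j) ^ 2) := by
  have diag : ∀ γ : ι → F, ∀ i ∈ s,
      nuGE F (B (∑ j ∈ s, γ j • v j) (∑ j ∈ s, γ j • v j)) (γ i * γ i * B (v i) (v i)) :=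
    fun γ i hi => by
      rw [hB.sum_smul_sum]
      exact (sum_nuGE_of_mem hi).trans (sum_nuGE_of_mem hi)
  rw [hB.sum_smul_sum s v α β, ← Finset.sum_product']
  refine nuGE_sq_sum fun ij hij => ?_
  obtain ⟨hi, hj⟩ := Finset.mem_product.1 hij
  refine (nuGE_mul (diag α _ hi) (diag β _ hj)).trans ?_
  convert nuGE_mul_left (α ij.1 ^ 2 * β ij.2 ^ 2) (hv _ hi _ hj) using 1 <;> ring

end IsStrict

end Supertropical

open Supertropical in
theorem stmt16_general {F : Type*} [SupertropicalSemifield F]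
    {V : Type*} [AddCommMonoid V] [Module F V]
    (B : V → V → F) (hstrict : IsStrict F B)
    {m : ℕ} (s : Fin m → V)
    (hcs : ∀ i j, i ≠ j → CS F B (s i) (s j)) :
    ∀ α β : Fin m → F, WeakCS F B (∑ i, α i • s i) (∑ j, β j • s j) := by
  intro α β
  have hs : ∀ i ∈ Finset.univ, ∀ j ∈ Finset.univ,
      nuGE F (B (s i) (s i) * B (s j) (s j)) (B (s i) (s j) ^ 2) := by
    intro i _ j _
    rcases eq_or_ne i j with rfl | hij
    · rw [sq]
      exact nuGE_refl _
    · exact (hcs i j hij).nuGE_sq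
  refine nuGE_add (hstrict.nuGE_sq_sum_smul hs α β) ?_
  rw [mul_comm]
  exact hstrict.nuGE_sq_sum_smul hs β α

open Supertropical in
/-- STATEMENT 16: For a strict supertropically symmetric bilinear form, if any
two elements of `S = {s₁,…,s_n}` form a Cauchy-Schwartz pair, then any two
vectors in the span of `S` are weakly Cauchy-Schwartz. -/
theorem stmt16 {F : Type*} [SupertropicalSemifield F]
    {V : Type*} [AddCommMonoid V] [Module F V]
    (B : V → V → F) (hB : IsBilinear F B) (hstrict : IsStrict F B)
    (hsym : SupSymmetric F B)
    {m : ℕ} (s : Fin m → V)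
    (hcs : ∀ i j, i ≠ j → CS F B (s i) (s j)) :
    ∀ α β : Fin m → F, WeakCS F B (∑ i, α i • s i) (∑ j, β j • s j) :=
  stmt16_general B hstrict s hcs
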